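/- arXiv:2108.05873 — 9 statements merged into one kernel-verified Lean document; each statement's English description precedes it below -/
import Mathlib

section
/- Let A ∈ C^{m×n} with weights M, N such that A^[†] exists. Then (A A^[*])^[†] and (A^[*] A)^[†] exist, and (A A^[*])^[†] = (A^[*])^[†] A^[†], (A^[*] A)^[†] = A^[†] (A^[*])^[†]. -/
open Matrix

/-- The weighted (MN-) adjoint `A^[*] = N⁻¹ Aᴴ M` of a matrix between
indefinite inner product spaces with weights `M` (output) and `N` (input). -/
noncomputable def wadj {m n : ℕ} (M : Matrix (Fin m) (Fin m) ℂ)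
    (N : Matrix (Fin n) (Fin n) ℂ) (A : Matrix (Fin m) (Fin n) ℂ) :
    Matrix (Fin n) (Fin m) ℂ := N⁻¹ * Aᴴ * M

/-- `X` is the weighted Moore-Penrose inverse of `A` w.r.t. weights `M`, `N`:
the four weighted Penrose equations. -/
def IsWMP {m n : ℕ} (M : Matrix (Fin m) (Fin m) ℂ)
    (N : Matrix (Fin n) (Fin n) ℂ) (A : Matrix (Fin m) (Fin n) ℂ)
    (X : Matrix (Fin n) (Fin m) ℂ) : Prop :=
  A * X * A = A ∧ X * A * X = X ∧
    wadj M M (A * X) = A * X ∧ wadj N N (X * A) = X * A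

theorem stmt_3 {m n : ℕ} (M : Matrix (Fin m) (Fin m) ℂ) (N : Matrix (Fin n) (Fin n) ℂ)
    (hM : M.IsHermitian) (hMu : IsUnit M) (hN : N.IsHermitian) (hNu : IsUnit N)
    (A : Matrix (Fin m) (Fin n) ℂ) (X : Matrix (Fin n) (Fin m) ℂ)
    (hX : IsWMP M N A X) :
    IsWMP M M (A * wadj M N A) (wadj N M X * X) ∧
      IsWMP N N (wadj M N A * A) (X * wadj N M X) := by
  obtain ⟨h1, h2, h3, h4⟩ := hX
  have hMd : IsUnit M.det := (Matrix.isUnit_iff_isUnit_det M).mp hMu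
  have hNd : IsUnit N.det := (Matrix.isUnit_iff_isUnit_det N).mp hNu
  set A' := wadj M N A with hA'
  set X' := wadj N M X with hX'
  -- key equations
  have e3 : X' * A' = A * X := by
    rw [← h3, hA', hX']
    simp only [wadj, conjTranspose_mul, Matrix.mul_assoc]
    rw [show N * (N⁻¹ * (Aᴴ * M)) = Aᴴ * M by
      rw [← Matrix.mul_assoc, Matrix.mul_nonsing_inv N hNd, Matrix.one_mul]]
  have e4 : A' * X' = X * A := by
    rw [← h4, hA', hX']
    simp only [wadj, conjTranspose_mul, Matrix.mul_assoc]
    rw [show M * (M⁻¹ * (Xᴴ * N)) = Xᴴ * N by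
      rw [← Matrix.mul_assoc, Matrix.mul_nonsing_inv M hMd, Matrix.one_mul]]
  have p1 : (A * A') * (X' * X) = A * X := by
    calc (A * A') * (X' * X) = A * (A' * X') * X := by
          simp only [Matrix.mul_assoc]
      _ = A * (X * A) * X := by rw [e4]
      _ = (A * X * A) * X := by simp only [Matrix.mul_assoc]
      _ = A * X := by rw [h1]
  have p2 : (X' * X) * (A * A') = A * X := by
    calc (X' * X) * (A * A') = X' * (X * A) * A' := by
          simp only [Matrix.mul_assoc]
      _ = X' * (A' * X') * A' := by rw [e4]
      _ = (X' * A') * (X' * A') := by simp only [Matrix.mul_assoc]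
      _ = (A * X) * (A * X) := by rw [e3]
      _ = A * (X * A * X) := by simp only [Matrix.mul_assoc]
      _ = A * X := by rw [h2]
  have q1 : (A' * A) * (X * X') = X * A := by
    calc (A' * A) * (X * X') = A' * (A * X) * X' := by
          simp only [Matrix.mul_assoc]
      _ = A' * (X' * A') * X' := by rw [e3]
      _ = (A' * X') * (A' * X') := by simp only [Matrix.mul_assoc]
      _ = (X * A) * (X * A) := by rw [e4]
      _ = X * (A * X * A) := by simp only [Matrix.mul_assoc]
      _ = X * A := by rw [h1]
  have q2 : (X * X') * (A' * A) = X * A := by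
    calc (X * X') * (A' * A) = X * (X' * A') * A := by
          simp only [Matrix.mul_assoc]
      _ = X * (A * X) * A := by rw [e3]
      _ = (X * A * X) * A := by simp only [Matrix.mul_assoc]
      _ = X * A := by rw [h2]
  refine ⟨⟨?_, ?_, ?_, ?_⟩, ⟨?_, ?_, ?_, ?_⟩⟩
  · rw [p1, show A * X * (A * A') = A * A' by
      rw [← Matrix.mul_assoc, h1]]
  · rw [p2]
    calc A * X * (X' * X) = (X' * A') * (X' * X) := by rw [e3]
      _ = X' * (A' * X') * X := by simp only [Matrix.mul_assoc]
      _ = X' * (X * A) * X := by rw [e4]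
      _ = X' * (X * A * X) := by simp only [Matrix.mul_assoc]
      _ = X' * X := by rw [h2]
  · rw [p1, h3]
  · rw [p2, h3]
  · rw [q1]
    calc X * A * (A' * A) = (A' * X') * (A' * A) := by rw [e4]
      _ = A' * (X' * A') * A := by simp only [Matrix.mul_assoc]
      _ = A' * (A * X) * A := by rw [e3]
      _ = A' * (A * X * A) := by simp only [Matrix.mul_assoc]
      _ = A' * A := by rw [h1]
  · rw [q2, show X * A * (X * X') = X * X' by
      rw [← Matrix.mul_assoc, h2]]
  · rw [q1, h4]
  · rw [q2, h4]
end

section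
/- Let A ∈ C^{m×n} with weights M, N such that A^[†] exists. Then A^[†] = A^[*] (A A^[*])^[†] = (A^[*] A)^[†] A^[*]. -/
open Matrix

private theorem cancel_left {k l : ℕ} {W W' : Matrix (Fin k) (Fin k) ℂ} (h : W * W' = 1)
    (t : Matrix (Fin k) (Fin l) ℂ) : W * (W' * t) = t := by
  rw [← Matrix.mul_assoc, h, Matrix.one_mul]

theorem stmt_4 {m n : ℕ} (M : Matrix (Fin m) (Fin m) ℂ) (N : Matrix (Fin n) (Fin n) ℂ)
    (hM : M.IsHermitian) (hMu : IsUnit M) (hN : N.IsHermitian) (hNu : IsUnit N)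
    (A : Matrix (Fin m) (Fin n) ℂ) (X : Matrix (Fin n) (Fin m) ℂ)
    (hX : IsWMP M N A X) :
    (∀ Y : Matrix (Fin m) (Fin m) ℂ, IsWMP M M (A * wadj M N A) Y →
        X = wadj M N A * Y) ∧
      (∀ Z : Matrix (Fin n) (Fin n) ℂ, IsWMP N N (wadj M N A * A) Z →
        X = Z * wadj M N A) := by
  obtain ⟨h1, h2, h3, h4⟩ := hX
  have hM2 : M * M⁻¹ = 1 := Matrix.mul_nonsing_inv M ((Matrix.isUnit_iff_isUnit_det M).mp hMu)
  have hN2 : N * N⁻¹ = 1 := Matrix.mul_nonsing_inv N ((Matrix.isUnit_iff_isUnit_det N).mp hNu)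
  simp only [wadj] at h3 h4 ⊢
  -- conjugate transpose of the first Penrose equation
  have h1' : Aᴴ * (Xᴴ * Aᴴ) = Aᴴ := by
    have := congrArg conjTranspose h1
    simpa [Matrix.conjTranspose_mul, Matrix.mul_assoc] using this
  have h1c : ∀ (t : Matrix (Fin m) (Fin m) ℂ), Aᴴ * (Xᴴ * (Aᴴ * t)) = Aᴴ * t := by
    intro t
    rw [← Matrix.mul_assoc Xᴴ, ← Matrix.mul_assoc Aᴴ, h1']
  -- (a) X * (A * As) = As
  have L1 : X * (A * (N⁻¹ * Aᴴ * M)) = N⁻¹ * Aᴴ * M := by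
    calc X * (A * (N⁻¹ * Aᴴ * M)) = (X * A) * (N⁻¹ * Aᴴ * M) := by
          simp only [Matrix.mul_assoc]
      _ = (N⁻¹ * (X * A)ᴴ * N) * (N⁻¹ * Aᴴ * M) := by rw [h4]
      _ = N⁻¹ * (Aᴴ * (Xᴴ * (Aᴴ * M))) := by
          simp only [Matrix.conjTranspose_mul, Matrix.mul_assoc, cancel_left hN2]
      _ = N⁻¹ * (Aᴴ * M) := by rw [h1c]
      _ = N⁻¹ * Aᴴ * M := by rw [Matrix.mul_assoc]
  -- (a') (As * A) * X = As
  have L1' : (N⁻¹ * Aᴴ * M * A) * X = N⁻¹ * Aᴴ * M := by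
    have hMAX : M * (A * X) = Xᴴ * (Aᴴ * M) := by
      calc M * (A * X) = M * (M⁻¹ * (A * X)ᴴ * M) := by rw [h3]
        _ = Xᴴ * (Aᴴ * M) := by
            simp only [Matrix.conjTranspose_mul, Matrix.mul_assoc, cancel_left hM2]
    calc (N⁻¹ * Aᴴ * M * A) * X = N⁻¹ * (Aᴴ * (M * (A * X))) := by
          simp only [Matrix.mul_assoc]
      _ = N⁻¹ * (Aᴴ * (Xᴴ * (Aᴴ * M))) := by rw [hMAX]
      _ = N⁻¹ * (Aᴴ * M) := by rw [h1c]
      _ = N⁻¹ * Aᴴ * M := by rw [Matrix.mul_assoc]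
  constructor
  · intro Y hY
    obtain ⟨g1, g2, g3, g4⟩ := hY
    simp only [wadj] at g3 g4
    -- (b) B * Xs = A
    have hBXs : (A * (N⁻¹ * Aᴴ * M)) * (M⁻¹ * Xᴴ * N) = A := by
      calc (A * (N⁻¹ * Aᴴ * M)) * (M⁻¹ * Xᴴ * N)
          = A * (N⁻¹ * (Aᴴ * (Xᴴ * N))) := by
            simp only [Matrix.mul_assoc, cancel_left hM2]
        _ = A * (N⁻¹ * (X * A)ᴴ * N) := by
            simp only [Matrix.conjTranspose_mul, Matrix.mul_assoc]
        _ = A * (X * A) := by rw [h4]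
        _ = A := by rw [← Matrix.mul_assoc, h1]
    -- (c) B * Y * (A * X) = A * X
    have hc : (A * (N⁻¹ * Aᴴ * M)) * Y * (A * X) = A * X := by
      have hAX : A * X = (A * (N⁻¹ * Aᴴ * M)) * ((M⁻¹ * Xᴴ * N) * X) := by
        rw [← Matrix.mul_assoc, hBXs]
      calc (A * (N⁻¹ * Aᴴ * M)) * Y * (A * X)
          = (A * (N⁻¹ * Aᴴ * M)) * Y * ((A * (N⁻¹ * Aᴴ * M)) * ((M⁻¹ * Xᴴ * N) * X)) := by
            rw [← hAX]
        _ = ((A * (N⁻¹ * Aᴴ * M)) * Y * (A * (N⁻¹ * Aᴴ * M))) * ((M⁻¹ * Xᴴ * N) * X) := by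
            simp only [Matrix.mul_assoc]
        _ = (A * (N⁻¹ * Aᴴ * M)) * ((M⁻¹ * Xᴴ * N) * X) := by rw [g1]
        _ = A * X := by rw [← hAX]
    -- (d) (A * X) * B = B
    have hPB : (A * X) * (A * (N⁻¹ * Aᴴ * M)) = A * (N⁻¹ * Aᴴ * M) := by
      rw [Matrix.mul_assoc A X, ← Matrix.mul_assoc, ← Matrix.mul_assoc, h1]
    -- (e) B * Y = A * X
    have hBY : (A * (N⁻¹ * Aᴴ * M)) * Y = A * X := by
      have := congrArg (fun T => M⁻¹ * Tᴴ * M) hc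
      rw [h3] at this
      calc (A * (N⁻¹ * Aᴴ * M)) * Y
          = ((A * X) * (A * (N⁻¹ * Aᴴ * M))) * Y := by rw [hPB]
        _ = (A * X) * ((A * (N⁻¹ * Aᴴ * M)) * Y) := by rw [Matrix.mul_assoc]
        _ = (M⁻¹ * (A * X)ᴴ * M) * (M⁻¹ * ((A * (N⁻¹ * Aᴴ * M)) * Y)ᴴ * M) := by
            rw [h3, g3]
        _ = M⁻¹ * ((A * (N⁻¹ * Aᴴ * M)) * Y * (A * X))ᴴ * M := by
            simp only [Matrix.conjTranspose_mul, Matrix.mul_assoc, cancel_left hM2]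
        _ = A * X := this
    calc X = X * A * X := h2.symm
      _ = X * (A * X) := by rw [Matrix.mul_assoc]
      _ = X * ((A * (N⁻¹ * Aᴴ * M)) * Y) := by rw [hBY]
      _ = (X * (A * (N⁻¹ * Aᴴ * M))) * Y := by simp only [Matrix.mul_assoc]
      _ = N⁻¹ * Aᴴ * M * Y := by rw [L1]
  · intro Z hZ
    obtain ⟨k1, k2, k3, k4⟩ := hZ
    simp only [wadj] at k3 k4
    -- (b') Xs * C = A
    have hXsC : (M⁻¹ * Xᴴ * N) * (N⁻¹ * Aᴴ * M * A) = A := by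
      calc (M⁻¹ * Xᴴ * N) * (N⁻¹ * Aᴴ * M * A)
          = M⁻¹ * (Xᴴ * (Aᴴ * (M * A))) := by
            simp only [Matrix.mul_assoc, cancel_left hN2]
        _ = (M⁻¹ * (A * X)ᴴ * M) * A := by
            simp only [Matrix.conjTranspose_mul, Matrix.mul_assoc]
        _ = (A * X) * A := by rw [h3]
        _ = A := h1
    -- (c') Q * (Z * C) = Q  where Q = X * A
    have hc' : (X * A) * (Z * (N⁻¹ * Aᴴ * M * A)) = X * A := by
      have hQ : X * A = (X * (M⁻¹ * Xᴴ * N)) * (N⁻¹ * Aᴴ * M * A) := by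
        rw [Matrix.mul_assoc, hXsC]
      calc (X * A) * (Z * (N⁻¹ * Aᴴ * M * A))
          = (X * (M⁻¹ * Xᴴ * N)) * ((N⁻¹ * Aᴴ * M * A) * (Z * (N⁻¹ * Aᴴ * M * A))) := by
            rw [hQ, Matrix.mul_assoc]
        _ = (X * (M⁻¹ * Xᴴ * N)) * ((N⁻¹ * Aᴴ * M * A) * Z * (N⁻¹ * Aᴴ * M * A)) := by
            rw [Matrix.mul_assoc (N⁻¹ * Aᴴ * M * A) Z]
        _ = (X * (M⁻¹ * Xᴴ * N)) * (N⁻¹ * Aᴴ * M * A) := by rw [k1]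
        _ = X * A := hQ.symm
    -- (d') C * (X * A) = C
    have hCQ : (N⁻¹ * Aᴴ * M * A) * (X * A) = N⁻¹ * Aᴴ * M * A := by
      calc (N⁻¹ * Aᴴ * M * A) * (X * A) = (N⁻¹ * Aᴴ * M) * (A * X * A) := by simp only [Matrix.mul_assoc]
        _ = N⁻¹ * Aᴴ * M * A := by rw [h1]
    -- (e') Z * C = X * A
    have hZC : Z * (N⁻¹ * Aᴴ * M * A) = X * A := by
      have := congrArg (fun T => N⁻¹ * Tᴴ * N) hc'
      rw [h4] at this
      calc Z * (N⁻¹ * Aᴴ * M * A)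
          = Z * ((N⁻¹ * Aᴴ * M * A) * (X * A)) := by rw [hCQ]
        _ = (Z * (N⁻¹ * Aᴴ * M * A)) * (X * A) := by simp only [Matrix.mul_assoc]
        _ = (N⁻¹ * (Z * (N⁻¹ * Aᴴ * M * A))ᴴ * N) * (N⁻¹ * (X * A)ᴴ * N) := by
            rw [k4, h4]
        _ = N⁻¹ * ((X * A) * (Z * (N⁻¹ * Aᴴ * M * A)))ᴴ * N := by
            simp only [Matrix.conjTranspose_mul, Matrix.mul_assoc, cancel_left hN2]
        _ = X * A := this
    calc X = X * A * X := h2.symm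
      _ = (Z * (N⁻¹ * Aᴴ * M * A)) * X := by rw [hZC]
      _ = Z * ((N⁻¹ * Aᴴ * M * A) * X) := by simp only [Matrix.mul_assoc]
      _ = Z * (N⁻¹ * Aᴴ * M) := by rw [L1']
end

section
/- Let A ∈ C^{m×n} with weights M, N such that A^[†] exists. Then (A A^[*])^[†](A A^[*]) A = A = (A A^[*])(A A^[*])^[†] A, and (A A^[*])^[†](A A^[*]) = (A A^[*])(A A^[*])^[†]. -/
open Matrix

/-- The weighted adjoint is an antihomomorphism (with matching middle weight). -/
lemma wadj_mul_aux {k l p : ℕ} {M : Matrix (Fin k) (Fin k) ℂ} {K : Matrix (Fin l) (Fin l) ℂ}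
    {N : Matrix (Fin p) (Fin p) ℂ} (hK : K * K⁻¹ = 1)
    (P : Matrix (Fin k) (Fin l) ℂ) (Q : Matrix (Fin l) (Fin p) ℂ) :
    wadj M N (P * Q) = wadj K N Q * wadj M K P := by
  have h : K * (K⁻¹ * (Pᴴ * M)) = Pᴴ * M := by
    rw [← Matrix.mul_assoc, hK, Matrix.one_mul]
  simp only [wadj, conjTranspose_mul, Matrix.mul_assoc, h]

/-- Uniqueness of the weighted Moore–Penrose inverse. -/
lemma wmp_unique {m n : ℕ} {M : Matrix (Fin m) (Fin m) ℂ} {N : Matrix (Fin n) (Fin n) ℂ}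
    (hMi : M * M⁻¹ = 1) (hNi : N * N⁻¹ = 1)
    {A : Matrix (Fin m) (Fin n) ℂ} {X Z : Matrix (Fin n) (Fin m) ℂ}
    (hX : IsWMP M N A X) (hZ : IsWMP M N A Z) : X = Z := by
  obtain ⟨x1, x2, x3, x4⟩ := hX
  obtain ⟨z1, z2, z3, z4⟩ := hZ
  have hAX : A * X = A * Z := by
    have e1 : A * X = (A * Z) * (A * X) := by
      rw [← Matrix.mul_assoc (A * Z) A X, z1]
    calc A * X = wadj M M (A * X) := x3.symm
      _ = wadj M M ((A * Z) * (A * X)) := by rw [← e1]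
      _ = wadj M M (A * X) * wadj M M (A * Z) := wadj_mul_aux hMi _ _
      _ = (A * X) * (A * Z) := by rw [x3, z3]
      _ = (A * X * A) * Z := by rw [Matrix.mul_assoc (A * X) A Z]
      _ = A * Z := by rw [x1]
  have hXA : X * A = Z * A := by
    have e1 : X * A = (X * A) * (Z * A) := by
      rw [Matrix.mul_assoc X A (Z * A), ← Matrix.mul_assoc A Z A, z1]
    calc X * A = wadj N N (X * A) := x4.symm
      _ = wadj N N ((X * A) * (Z * A)) := by rw [← e1]
      _ = wadj N N (Z * A) * wadj N N (X * A) := wadj_mul_aux hNi _ _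
      _ = (Z * A) * (X * A) := by rw [x4, z4]
      _ = Z * (A * X * A) := by
          rw [Matrix.mul_assoc Z A (X * A), Matrix.mul_assoc A X A]
      _ = Z * A := by rw [x1]
  calc X = X * A * X := x2.symm
    _ = X * (A * Z) := by rw [Matrix.mul_assoc, hAX]
    _ = (Z * A) * Z := by rw [← Matrix.mul_assoc, hXA]
    _ = Z := z2

theorem stmt_5 {m n : ℕ} (M : Matrix (Fin m) (Fin m) ℂ) (N : Matrix (Fin n) (Fin n) ℂ)
    (hM : M.IsHermitian) (hMu : IsUnit M) (hN : N.IsHermitian) (hNu : IsUnit N)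
    (A : Matrix (Fin m) (Fin n) ℂ) (X : Matrix (Fin n) (Fin m) ℂ)
    (hX : IsWMP M N A X)
    (Y : Matrix (Fin m) (Fin m) ℂ) (hY : IsWMP M M (A * wadj M N A) Y) :
    Y * (A * wadj M N A) * A = A ∧ (A * wadj M N A) * Y * A = A ∧
      Y * (A * wadj M N A) = (A * wadj M N A) * Y := by
  have hMd : IsUnit M.det := (Matrix.isUnit_iff_isUnit_det M).mp hMu
  have hNd : IsUnit N.det := (Matrix.isUnit_iff_isUnit_det N).mp hNu
  have hMi : M * M⁻¹ = 1 := Matrix.mul_nonsing_inv M hMd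
  have hMi' : M⁻¹ * M = 1 := Matrix.nonsing_inv_mul M hMd
  have hNi : N * N⁻¹ = 1 := Matrix.mul_nonsing_inv N hNd
  have hNi' : N⁻¹ * N = 1 := Matrix.nonsing_inv_mul N hNd
  have hMH : Mᴴ = M := hM
  have hNH : Nᴴ = N := hN
  have hMiH : M⁻¹ᴴ = M⁻¹ := hM.inv
  have hNiH : N⁻¹ᴴ = N⁻¹ := hN.inv
  have cM : ∀ {p : ℕ} (Z : Matrix (Fin m) (Fin p) ℂ), M * (M⁻¹ * Z) = Z := by
    intro p Z; rw [← Matrix.mul_assoc, hMi, Matrix.one_mul]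
  have cM' : ∀ {p : ℕ} (Z : Matrix (Fin m) (Fin p) ℂ), M⁻¹ * (M * Z) = Z := by
    intro p Z; rw [← Matrix.mul_assoc, hMi', Matrix.one_mul]
  have cN : ∀ {p : ℕ} (Z : Matrix (Fin n) (Fin p) ℂ), N * (N⁻¹ * Z) = Z := by
    intro p Z; rw [← Matrix.mul_assoc, hNi, Matrix.one_mul]
  have cN' : ∀ {p : ℕ} (Z : Matrix (Fin n) (Fin p) ℂ), N⁻¹ * (N * Z) = Z := by
    intro p Z; rw [← Matrix.mul_assoc, hNi', Matrix.one_mul]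
  obtain ⟨h1, h2, h3, h4⟩ := hX
  set C := wadj M N A with hC
  set B := A * C with hB
  -- B is M-self-adjoint
  have hBw : wadj M M B = B := by
    simp only [hB, hC, wadj, conjTranspose_mul, conjTranspose_conjTranspose,
      hMH, hNiH, Matrix.mul_assoc, cM', cM, cN, cN', hMi, hMi', Matrix.mul_one]
  -- hence Bᴴ * M = M * B
  have hBHM : Bᴴ * M = M * B := by
    have := hBw
    simp only [wadj] at this
    calc Bᴴ * M = M * (M⁻¹ * (Bᴴ * M)) := (cM _).symm
      _ = M * (M⁻¹ * Bᴴ * M) := by rw [Matrix.mul_assoc (M⁻¹) Bᴴ M]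
      _ = M * B := by rw [this]
  obtain ⟨k1, k2, k3, k4⟩ := hY
  -- Y * B = B * wadj M M Y  and  B * Y = wadj M M Y * B
  have hYB : Y * B = B * wadj M M Y := by
    calc Y * B = wadj M M (Y * B) := k4.symm
      _ = M⁻¹ * (Bᴴ * (Yᴴ * M)) := by
          simp only [wadj, conjTranspose_mul, Matrix.mul_assoc]
      _ = M⁻¹ * (Bᴴ * M * (M⁻¹ * (Yᴴ * M))) := by
          rw [Matrix.mul_assoc Bᴴ M _, cM]
      _ = M⁻¹ * (M * B * (M⁻¹ * (Yᴴ * M))) := by rw [hBHM]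
      _ = B * (M⁻¹ * (Yᴴ * M)) := by
          rw [Matrix.mul_assoc M B _, cM']
      _ = B * wadj M M Y := by
          simp only [wadj, Matrix.mul_assoc]
  have hBY : B * Y = wadj M M Y * B := by
    calc B * Y = wadj M M (B * Y) := k3.symm
      _ = M⁻¹ * (Yᴴ * (Bᴴ * M)) := by
          simp only [wadj, conjTranspose_mul, Matrix.mul_assoc]
      _ = M⁻¹ * (Yᴴ * (M * B)) := by rw [hBHM]
      _ = M⁻¹ * (Yᴴ * M) * B := by
          simp only [Matrix.mul_assoc]
      _ = wadj M M Y * B := by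
          simp only [wadj, Matrix.mul_assoc]
  -- wadj M M Y is also a weighted MP inverse of B
  have hwY : IsWMP M M B (wadj M M Y) := by
    have hww : wadj M M (wadj M M Y) = Y := by
      simp only [wadj, conjTranspose_mul, conjTranspose_conjTranspose, hMH, hMiH,
        Matrix.mul_assoc, cM, cM', hMi', Matrix.mul_one]
    refine ⟨?_, ?_, ?_, ?_⟩
    · -- B * wadj Y * B = B : apply wadj to k1
      have := congrArg (wadj M M) k1
      rw [wadj_mul_aux hMi (B * Y) B, wadj_mul_aux hMi B Y, hBw] at this
      rw [← Matrix.mul_assoc] at this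
      exact this
    · -- wadj Y * B * wadj Y = wadj Y : apply wadj to k2
      have := congrArg (wadj M M) k2
      rw [wadj_mul_aux hMi (Y * B) Y, wadj_mul_aux hMi Y B, hBw] at this
      rw [← Matrix.mul_assoc] at this
      exact this
    · rw [← hYB]
      exact k4
    · rw [← hBY]
      exact k3
  -- uniqueness gives Y = wadj M M Y, hence Y and B commute
  have hYY : wadj M M Y = Y := (wmp_unique hMi hMi ⟨k1, k2, k3, k4⟩ hwY).symm
  have hcomm : Y * B = B * Y := by rw [hYB, hYY]
  -- key identity: B * (M⁻¹ * Xᴴ * N * X) * A = A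
  have hAXN : Aᴴ * (Xᴴ * N) = N * (X * A) := by
    have := h4
    simp only [wadj] at this
    calc Aᴴ * (Xᴴ * N) = N * (N⁻¹ * (Aᴴ * (Xᴴ * N))) := (cN _).symm
      _ = N * (N⁻¹ * (X * A)ᴴ * N) := by
          simp only [conjTranspose_mul, Matrix.mul_assoc]
      _ = N * (X * A) := by rw [this]
  have hkey : B * (M⁻¹ * (Xᴴ * (N * X))) * A = A := by
    have e1 : B * (M⁻¹ * (Xᴴ * (N * X))) = A * X := by
      calc B * (M⁻¹ * (Xᴴ * (N * X)))
          = A * (N⁻¹ * (Aᴴ * (M * (M⁻¹ * (Xᴴ * (N * X)))))) := by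
            simp only [hB, hC, wadj, Matrix.mul_assoc]
        _ = A * (N⁻¹ * (Aᴴ * (Xᴴ * (N * X)))) := by rw [cM]
        _ = A * (N⁻¹ * (Aᴴ * (Xᴴ * N) * X)) := by
            simp only [Matrix.mul_assoc]
        _ = A * (N⁻¹ * (N * (X * A) * X)) := by rw [hAXN]
        _ = A * (N⁻¹ * (N * (X * A * X))) := by
            simp only [Matrix.mul_assoc]
        _ = A * (X * A * X) := by rw [cN']
        _ = A * X := by rw [h2]
    rw [e1, Matrix.mul_assoc, ← Matrix.mul_assoc A X A, h1]
  -- goal 2 : B * Y * A = A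
  have g2 : B * Y * A = A := by
    calc B * Y * A = B * Y * (B * (M⁻¹ * (Xᴴ * (N * X))) * A) := by rw [hkey]
      _ = (B * Y * B) * (M⁻¹ * (Xᴴ * (N * X))) * A := by
          simp only [Matrix.mul_assoc]
      _ = B * (M⁻¹ * (Xᴴ * (N * X))) * A := by rw [k1]
      _ = A := hkey
  refine ⟨?_, g2, hcomm⟩
  rw [hcomm]
  exact g2
end

section
/- Let A, B, C, D be complex matrices of suitable sizes. If rank([[A, B],[C, D]]) = rank(A) = rank(B) = rank(C), then rank(A) = rank(D). -/
open Matrix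

/-!
If `rank (M * N) = rank M` then `M * N` and `M` have the same column space, so `M = M * N * Y`.
Since `rank A ≤ rank [A B] ≤ rank [[A, B], [C, D]] = rank A`, the columns of `B` lie in the
column space of `A` and the rows of `[C D]` in the row space of `[A B]`: `B = A X`, `C = Z A`,
`D = Z A X`. Then `rank D ≤ rank (A X) = rank B = rank A`, and `rank B = rank A` gives
`A = A X Y`, so `C = Z A X Y = D Y` and `rank A = rank C ≤ rank D`.
-/

namespace Matrix

variable {K : Type*} {m n p q : Type*} [Fintype n] [Fintype p]

theorem exists_eq_mul_of_range_mulVecLin_le [CommSemiring K] {A : Matrix m n K}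
    {B : Matrix m p K} (h : LinearMap.range B.mulVecLin ≤ LinearMap.range A.mulVecLin) :
    ∃ X : Matrix n p K, B = A * X := by
  have hcol : ∀ j, ∃ x, A *ᵥ x = B.col j := fun j =>
    h (by rw [range_mulVecLin]; exact Submodule.subset_span ⟨j, rfl⟩)
  choose x hx using hcol
  refine ⟨(of x)ᵀ, ext_col fun j => ?_⟩
  rw [← hx j]
  ext i
  simp [mul_apply, mulVec, dotProduct]

variable [Field K]

theorem exists_eq_mul_mul_of_rank_mul_eq {M : Matrix m n K} {N : Matrix n p K}
    (h : (M * N).rank = M.rank) : ∃ Y : Matrix p n K, M = M * N * Y := by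
  have hle : LinearMap.range (M * N).mulVecLin ≤ LinearMap.range M.mulVecLin := by
    rw [mulVecLin_mul]
    exact LinearMap.range_comp_le_range _ _
  exact exists_eq_mul_of_range_mulVecLin_le (Submodule.eq_of_le_of_finrank_eq hle h).ge

theorem rank_le_rank_fromCols (A : Matrix m n K) (B : Matrix m p K) :
    A.rank ≤ (fromCols A B).rank :=
  rank_submatrix_le (fromCols A B) id Sum.inl

theorem rank_le_rank_fromRows (A : Matrix m n K) (C : Matrix q n K) :
    A.rank ≤ (fromRows A C).rank :=
  rank_submatrix_le (fromRows A C) Sum.inl id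

theorem exists_eq_mul_of_rank_fromCols_eq [DecidableEq n] {A : Matrix m n K} {B : Matrix m p K}
    (h : (fromCols A B).rank = A.rank) : ∃ X : Matrix n p K, B = A * X := by
  have hA : fromCols A B * fromRows (1 : Matrix n n K) (0 : Matrix p n K) = A := by
    rw [fromCols_mul_fromRows, Matrix.mul_one, Matrix.mul_zero, add_zero]
  obtain ⟨Y, hY⟩ := exists_eq_mul_mul_of_rank_mul_eq
    (M := fromCols A B) (N := fromRows (1 : Matrix n n K) (0 : Matrix p n K)) (by rw [hA, h])
  rw [hA, ← fromCols_toCols Y, mul_fromCols, fromCols_ext_iff] at hY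
  exact ⟨_, hY.2⟩

theorem exists_eq_mul_of_rank_fromRows_eq [Fintype m] [Fintype q] [DecidableEq m]
    {A : Matrix m n K} {C : Matrix q n K} (h : (fromRows A C).rank = A.rank) :
    ∃ Z : Matrix q m K, C = Z * A := by
  obtain ⟨X, hX⟩ := exists_eq_mul_of_rank_fromCols_eq (A := Aᵀ) (B := Cᵀ)
    (by rwa [← transpose_fromRows, rank_transpose, rank_transpose])
  exact ⟨Xᵀ, by rw [← transpose_transpose C, hX, transpose_mul, transpose_transpose]⟩

end Matrix

theorem stmt_6 {m n k l : ℕ}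
    (A : Matrix (Fin m) (Fin n) ℂ) (B : Matrix (Fin m) (Fin l) ℂ)
    (C : Matrix (Fin k) (Fin n) ℂ) (D : Matrix (Fin k) (Fin l) ℂ)
    (h : (Matrix.fromBlocks A B C D).rank = A.rank)
    (hB : A.rank = B.rank) (hC : A.rank = C.rank) :
    A.rank = D.rank := by
  rw [← fromRows_fromCols_eq_fromBlocks] at h
  have hT : (fromCols A B).rank = A.rank :=
    le_antisymm (h ▸ rank_le_rank_fromRows _ _) (rank_le_rank_fromCols A B)
  obtain ⟨X, rfl⟩ := exists_eq_mul_of_rank_fromCols_eq hT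
  obtain ⟨Z, hZ⟩ := exists_eq_mul_of_rank_fromRows_eq (h.trans hT.symm)
  obtain ⟨hCZ, hDZ⟩ := (fromCols_ext_iff _ _ _ _).mp (hZ.trans (mul_fromCols _ _ _))
  obtain ⟨Y, hY⟩ := exists_eq_mul_mul_of_rank_mul_eq hB.symm
  have hCD : C = D * Y := by rw [hCZ, hDZ, Matrix.mul_assoc, ← hY]
  apply le_antisymm
  · calc A.rank = (D * Y).rank := by rw [hC, hCD]
      _ ≤ D.rank := rank_mul_le_left D Y
  · calc D.rank = (Z * (A * X)).rank := by rw [hDZ]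
      _ ≤ (A * X).rank := rank_mul_le_right Z (A * X)
      _ = A.rank := hB.symm
end

section
/- Let A ∈ C^{m×n} and B ∈ C^{n×ℓ} such that A^[†] and B^[†] exist (with a common weight N on C^n and weights M on C^m, L on C^ℓ). Then the following are equivalent: (i) A^[*] A B B^[*] is range Hermitian, i.e., R(A^[*]ABB^[*]) = R((A^[*]ABB^[*])^[*]); (ii) R(A^[*] A B) ⊆ R(B) and R(B B^[*] A^[*]) ⊆ R(A^[*]). -/
open Matrix

/-- Auxiliary: if `P` has a "projector" control `E = Z*P` with `E*P = P`, and
`range (P*Q) ≤ range Q`, then `range (P*Q) = range P ⊓ range Q`. -/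
lemma key_aux {n : ℕ} {P Q E Z : Matrix (Fin n) (Fin n) ℂ}
    (eEP : E * P = P) (eZP : Z * P = E)
    (h1 : LinearMap.range (P * Q).mulVecLin ≤ LinearMap.range Q.mulVecLin) :
    LinearMap.range (P * Q).mulVecLin =
      LinearMap.range P.mulVecLin ⊓ LinearMap.range Q.mulVecLin := by
  classical
  have hs : LinearMap.range (P * Q).mulVecLin
      = Submodule.map P.mulVecLin (LinearMap.range Q.mulVecLin) := by
    rw [Matrix.mulVecLin_mul, LinearMap.range_comp]
  have hsP : LinearMap.range (P * Q).mulVecLin ≤ LinearMap.range P.mulVecLin := by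
    rw [Matrix.mulVecLin_mul]; exact LinearMap.range_comp_le_range _ _
  set V := LinearMap.range P.mulVecLin ⊓ LinearMap.range Q.mulVecLin with hVdef
  have hsV : LinearMap.range (P * Q).mulVecLin ≤ V := le_inf hsP h1
  have hinj : ∀ v ∈ LinearMap.range P.mulVecLin, P.mulVecLin v = 0 → v = 0 := by
    rintro v ⟨u, rfl⟩ h0
    have e1 : E.mulVecLin (P.mulVecLin u) = P.mulVecLin u := by
      simp only [Matrix.mulVecLin_apply, Matrix.mulVec_mulVec, eEP]
    have e2 : E.mulVecLin (P.mulVecLin u) = 0 := by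
      rw [← eZP]
      have : (Z * P).mulVecLin (P.mulVecLin u) = Z.mulVecLin (P.mulVecLin (P.mulVecLin u)) := by
        simp only [Matrix.mulVecLin_apply, Matrix.mulVec_mulVec, Matrix.mul_assoc]
      rw [this, h0, map_zero]
    rw [← e1, e2]
  have hmap : Submodule.map P.mulVecLin V ≤ LinearMap.range (P * Q).mulVecLin := by
    rw [hs]; exact Submodule.map_mono inf_le_right
  have hrank : Module.finrank ℂ V ≤ Module.finrank ℂ (LinearMap.range (P * Q).mulVecLin) := by
    have hker : LinearMap.ker (P.mulVecLin.domRestrict V) = ⊥ := by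
      rw [LinearMap.ker_eq_bot']
      rintro ⟨v, hv⟩ hfv
      have hv0 : v = 0 := by
        refine hinj v hv.1 ?_
        simpa using hfv
      exact Subtype.ext hv0
    have hfr := LinearMap.finrank_range_of_inj (LinearMap.ker_eq_bot.mp hker)
    rw [LinearMap.range_domRestrict] at hfr
    calc Module.finrank ℂ V
        = Module.finrank ℂ (Submodule.map P.mulVecLin V) := hfr.symm
      _ ≤ Module.finrank ℂ (LinearMap.range (P * Q).mulVecLin) := Submodule.finrank_mono hmap
  exact Submodule.eq_of_le_of_finrank_le hsV hrank

lemma key {n : ℕ} {P Q E Z F W : Matrix (Fin n) (Fin n) ℂ}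
    (eEP : E * P = P) (eZP : Z * P = E) (eFQ : F * Q = Q) (eWQ : W * Q = F) :
    LinearMap.range (P * Q).mulVecLin = LinearMap.range (Q * P).mulVecLin ↔
      (LinearMap.range (P * Q).mulVecLin ≤ LinearMap.range Q.mulVecLin ∧
        LinearMap.range (Q * P).mulVecLin ≤ LinearMap.range P.mulVecLin) := by
  have hsP : LinearMap.range (P * Q).mulVecLin ≤ LinearMap.range P.mulVecLin := by
    rw [Matrix.mulVecLin_mul]; exact LinearMap.range_comp_le_range _ _
  have htQ : LinearMap.range (Q * P).mulVecLin ≤ LinearMap.range Q.mulVecLin := by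
    rw [Matrix.mulVecLin_mul]; exact LinearMap.range_comp_le_range _ _
  constructor
  · intro h
    exact ⟨by rw [h]; exact htQ, by rw [← h]; exact hsP⟩
  · rintro ⟨h1, h2⟩
    rw [key_aux eEP eZP h1, key_aux eFQ eWQ h2, inf_comm]

theorem stmt_8 {m n l : ℕ} (M : Matrix (Fin m) (Fin m) ℂ) (N : Matrix (Fin n) (Fin n) ℂ)
    (L : Matrix (Fin l) (Fin l) ℂ)
    (hM : M.IsHermitian) (hMu : IsUnit M) (hN : N.IsHermitian) (hNu : IsUnit N)
    (hL : L.IsHermitian) (hLu : IsUnit L)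
    (A : Matrix (Fin m) (Fin n) ℂ) (B : Matrix (Fin n) (Fin l) ℂ)
    (X : Matrix (Fin n) (Fin m) ℂ) (Y : Matrix (Fin l) (Fin n) ℂ)
    (hX : IsWMP M N A X) (hY : IsWMP N L B Y) :
    (LinearMap.range (wadj M N A * A * (B * wadj N L B)).mulVecLin =
        LinearMap.range (wadj N N (wadj M N A * A * (B * wadj N L B))).mulVecLin) ↔
      (LinearMap.range (wadj M N A * A * B).mulVecLin ≤
          LinearMap.range B.mulVecLin ∧
        LinearMap.range (B * wadj N L B * wadj M N A).mulVecLin ≤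
          LinearMap.range (wadj M N A).mulVecLin) := by
  obtain ⟨hX1, hX2, hX3, hX4⟩ := hX
  obtain ⟨hY1, hY2, hY3, hY4⟩ := hY
  simp only [wadj] at hX3 hX4 hY3 hY4
  -- hX3 : M⁻¹ * (A * X)ᴴ * M = A * X, etc.
  have hMd : IsUnit M.det := (Matrix.isUnit_iff_isUnit_det M).mp hMu
  have hNd : IsUnit N.det := (Matrix.isUnit_iff_isUnit_det N).mp hNu
  have hLd : IsUnit L.det := (Matrix.isUnit_iff_isUnit_det L).mp hLu
  have hMM : M * M⁻¹ = 1 := Matrix.mul_nonsing_inv M hMd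
  have hM'M : M⁻¹ * M = 1 := Matrix.nonsing_inv_mul M hMd
  have hNN : N * N⁻¹ = 1 := Matrix.mul_nonsing_inv N hNd
  have hN'N : N⁻¹ * N = 1 := Matrix.nonsing_inv_mul N hNd
  have hLL : L * L⁻¹ = 1 := Matrix.mul_nonsing_inv L hLd
  have hL'L : L⁻¹ * L = 1 := Matrix.nonsing_inv_mul L hLd
  -- derived adjoint-symmetry facts
  have dX3 : M * (A * X) = Xᴴ * (Aᴴ * M) := by
    conv_lhs => rw [← hX3]
    simp only [← Matrix.mul_assoc, hMM, Matrix.one_mul]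
    simp only [Matrix.conjTranspose_mul, Matrix.mul_assoc]
  have dX4' : X * A * N⁻¹ = N⁻¹ * (Aᴴ * Xᴴ) := by
    conv_lhs => rw [← hX4]
    simp only [Matrix.conjTranspose_mul, Matrix.mul_assoc, hNN, Matrix.mul_one]
  have dY4 : Bᴴ * (Yᴴ * L) = L * (Y * B) := by
    conv_rhs => rw [← hY4]
    simp only [← Matrix.mul_assoc, hLL, Matrix.one_mul]
    simp only [Matrix.conjTranspose_mul, Matrix.mul_assoc]
  have cX1 : Aᴴ * (Xᴴ * Aᴴ) = Aᴴ := by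
    have h := congrArg Matrix.conjTranspose hX1
    simpa [Matrix.conjTranspose_mul, Matrix.mul_assoc] using h
  have cY : Yᴴ * (Bᴴ * (Yᴴ * Bᴴ)) = Yᴴ * Bᴴ := by
    have h0 : B * Y * (B * Y) = B * Y := by rw [← Matrix.mul_assoc, hY1]
    have h := congrArg Matrix.conjTranspose h0
    simpa [Matrix.conjTranspose_mul, Matrix.mul_assoc] using h
  -- the key matrix identities
  have idPX : (wadj M N A * A) * X = wadj M N A := by
    simp only [wadj]
    calc N⁻¹ * Aᴴ * M * A * X
        = N⁻¹ * (Aᴴ * (M * (A * X))) := by simp only [Matrix.mul_assoc]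
      _ = N⁻¹ * (Aᴴ * (Xᴴ * (Aᴴ * M))) := by rw [dX3]
      _ = N⁻¹ * ((Aᴴ * (Xᴴ * Aᴴ)) * M) := by simp only [Matrix.mul_assoc]
      _ = N⁻¹ * Aᴴ * M := by rw [cX1, Matrix.mul_assoc]
  have idEP : (X * A) * (wadj M N A * A) = wadj M N A * A := by
    simp only [wadj]
    calc (X * A) * (N⁻¹ * Aᴴ * M * A)
        = (X * A * N⁻¹) * (Aᴴ * (M * A)) := by simp only [Matrix.mul_assoc]
      _ = (N⁻¹ * (Aᴴ * Xᴴ)) * (Aᴴ * (M * A)) := by rw [dX4']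
      _ = N⁻¹ * ((Aᴴ * (Xᴴ * Aᴴ)) * (M * A)) := by simp only [Matrix.mul_assoc]
      _ = N⁻¹ * Aᴴ * M * A := by rw [cX1, Matrix.mul_assoc, Matrix.mul_assoc]
  have idZP : (X * M⁻¹ * Xᴴ * N) * (wadj M N A * A) = X * A := by
    simp only [wadj]
    calc (X * M⁻¹ * Xᴴ * N) * (N⁻¹ * Aᴴ * M * A)
        = X * (M⁻¹ * (Xᴴ * ((N * N⁻¹) * (Aᴴ * (M * A))))) := by simp only [Matrix.mul_assoc]
      _ = X * (M⁻¹ * ((Xᴴ * (Aᴴ * M)) * A)) := by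
            rw [hNN, Matrix.one_mul]; simp only [Matrix.mul_assoc]
      _ = X * (M⁻¹ * ((M * (A * X)) * A)) := by rw [← dX3]
      _ = X * ((M⁻¹ * M) * (A * X * A)) := by simp only [Matrix.mul_assoc]
      _ = X * A := by rw [hM'M, Matrix.one_mul, hX1]
  have idQY : (B * wadj N L B) * (N⁻¹ * Yᴴ * L) = B := by
    simp only [wadj]
    calc (B * (L⁻¹ * Bᴴ * N)) * (N⁻¹ * Yᴴ * L)
        = B * (L⁻¹ * (Bᴴ * ((N * N⁻¹) * (Yᴴ * L)))) := by simp only [Matrix.mul_assoc]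
      _ = B * (L⁻¹ * (Bᴴ * (Yᴴ * L))) := by rw [hNN, Matrix.one_mul]
      _ = B * (L⁻¹ * (L * (Y * B))) := by rw [dY4]
      _ = B * ((L⁻¹ * L) * (Y * B)) := by rw [Matrix.mul_assoc]
      _ = B * (Y * B) := by rw [hL'L, Matrix.one_mul]
      _ = B := by rw [← Matrix.mul_assoc, hY1]
  have idFQ : (B * Y) * (B * wadj N L B) = B * wadj N L B := by
    calc (B * Y) * (B * wadj N L B)
        = (B * Y * B) * wadj N L B := by simp only [Matrix.mul_assoc]
      _ = B * wadj N L B := by rw [hY1]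
  have idWQ : (N⁻¹ * Yᴴ * L * Y) * (B * wadj N L B) = B * Y := by
    simp only [wadj]
    calc (N⁻¹ * Yᴴ * L * Y) * (B * (L⁻¹ * Bᴴ * N))
        = N⁻¹ * (Yᴴ * ((L * (Y * B)) * (L⁻¹ * (Bᴴ * N)))) := by simp only [Matrix.mul_assoc]
      _ = N⁻¹ * (Yᴴ * ((Bᴴ * (Yᴴ * L)) * (L⁻¹ * (Bᴴ * N)))) := by rw [← dY4]
      _ = N⁻¹ * (Yᴴ * (Bᴴ * (Yᴴ * ((L * L⁻¹) * (Bᴴ * N))))) := by simp only [Matrix.mul_assoc]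
      _ = N⁻¹ * (Yᴴ * (Bᴴ * (Yᴴ * (Bᴴ * N)))) := by rw [hLL, Matrix.one_mul]
      _ = N⁻¹ * ((Yᴴ * (Bᴴ * (Yᴴ * Bᴴ))) * N) := by simp only [Matrix.mul_assoc]
      _ = N⁻¹ * ((Yᴴ * Bᴴ) * N) := by rw [cY]
      _ = N⁻¹ * ((B * Y)ᴴ * N) := by rw [Matrix.conjTranspose_mul]
      _ = B * Y := by rw [← Matrix.mul_assoc, hY3]
  -- adjoint of the product
  have idadj : wadj N N (wadj M N A * A * (B * wadj N L B))
      = B * wadj N L B * (wadj M N A * A) := by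
    simp only [wadj, Matrix.conjTranspose_mul, Matrix.conjTranspose_nonsing_inv,
      Matrix.conjTranspose_conjTranspose, hM.eq, hN.eq, hL.eq, Matrix.mul_assoc]
    rw [Matrix.nonsing_inv_mul_cancel_left _ _ hNd, hN'N, Matrix.mul_one,
      Matrix.mul_nonsing_inv_cancel_left _ _ hNd]
  -- range equalities
  have hq : LinearMap.range B.mulVecLin = LinearMap.range (B * wadj N L B).mulVecLin := by
    refine le_antisymm ?_ ?_
    · conv_lhs => rw [← idQY]
      rw [Matrix.mulVecLin_mul]
      exact LinearMap.range_comp_le_range _ _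
    · rw [Matrix.mulVecLin_mul]
      exact LinearMap.range_comp_le_range _ _
  have hp : LinearMap.range (wadj M N A).mulVecLin
      = LinearMap.range (wadj M N A * A).mulVecLin := by
    refine le_antisymm ?_ ?_
    · conv_lhs => rw [← idPX]
      rw [Matrix.mulVecLin_mul]
      exact LinearMap.range_comp_le_range _ _
    · rw [Matrix.mulVecLin_mul]
      exact LinearMap.range_comp_le_range _ _
  have h5 : LinearMap.range (wadj M N A * A * B).mulVecLin
      = LinearMap.range (wadj M N A * A * (B * wadj N L B)).mulVecLin := by
    rw [Matrix.mulVecLin_mul, LinearMap.range_comp, hq, ← LinearMap.range_comp,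
      ← Matrix.mulVecLin_mul]
  have h6 : LinearMap.range (B * wadj N L B * wadj M N A).mulVecLin
      = LinearMap.range (B * wadj N L B * (wadj M N A * A)).mulVecLin := by
    rw [Matrix.mulVecLin_mul, LinearMap.range_comp, hp, ← LinearMap.range_comp,
      ← Matrix.mulVecLin_mul]
  rw [idadj, h5, h6, hq, hp]
  exact key idEP idZP idFQ idWQ
end

section
/- Let A ∈ C^{m×n} and B ∈ C^{n×ℓ} with A^[†] and B^[†] existing, D = AB. If B B^[†] A^[*] A B = A^[*] A B and A^[†] A B B^[*] A^[*] = B B^[*] A^[*], then rank([[D, A A^[*] D],[D B^[*] B, D D^[*] D]]) = rank(D). -/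
open Matrix

/-!
Write `D = AB`. The first hypothesis gives `A A^[*] D = D Q` with `Q = B^[†] A^[*] D`. Since
`A^[†] A` is `N`-self-adjoint, taking adjoints in the second one gives `D B^[*] A^[†] A = D B^[*]`,
hence `D B^[*] B = P D` with `P = D B^[*] A^[†]`, and then also `D D^[*] D = P D Q`. So the block
matrix is `[I; P] D [I, Q]`, of rank at most `rank D`, while `D` is one of its blocks.
-/

theorem Matrix.rank_fromBlocks_mul {K m m' l l' : Type*} [Field K] [Fintype m] [Fintype l]
    [Fintype l'] [DecidableEq m] [DecidableEq l] (D : Matrix m l K) (P : Matrix m' m K)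
    (Q : Matrix l l' K) :
    (fromBlocks D (D * Q) (P * D) (P * D * Q)).rank = D.rank := by
  have factor : fromRows 1 P * D * fromCols 1 Q = fromBlocks D (D * Q) (P * D) (P * D * Q) := by
    rw [Matrix.mul_assoc, mul_fromCols, fromRows_mul_fromCols]
    simp only [Matrix.one_mul, Matrix.mul_one, Matrix.mul_assoc]
  refine le_antisymm ?_ ?_
  · rw [← factor]
    exact (rank_mul_le_left _ _).trans (rank_mul_le_right _ _)
  · exact rank_submatrix_le (fromBlocks D (D * Q) (P * D) (P * D * Q)) Sum.inl Sum.inl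

theorem Matrix.conjTranspose_mul_mul_eq_of_mul_eq {α n k : Type*} [CommSemiring α] [StarRing α]
    [Fintype n] {N P : Matrix n n α} (hP : Pᴴ * N = N * P) {W : Matrix n k α}
    (hW : P * W = W) : Wᴴ * N * P = Wᴴ * N := by
  rw [Matrix.mul_assoc, ← hP, ← Matrix.mul_assoc, ← conjTranspose_mul, hW]

section WeightedAdjoint

variable {m n l : ℕ}

theorem wadj_mul {M : Matrix (Fin m) (Fin m) ℂ} {N : Matrix (Fin n) (Fin n) ℂ}
    {L : Matrix (Fin l) (Fin l) ℂ} (hN : IsUnit N) (A : Matrix (Fin m) (Fin n) ℂ)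
    (B : Matrix (Fin n) (Fin l) ℂ) : wadj M L (A * B) = wadj N L B * wadj M N A := by
  have hN' : IsUnit N.det := (isUnit_iff_isUnit_det N).mp hN
  simp only [wadj, conjTranspose_mul, Matrix.mul_assoc, mul_nonsing_inv_cancel_left N _ hN']

theorem conjTranspose_mul_eq_of_wadj_eq_self {N : Matrix (Fin n) (Fin n) ℂ} (hN : IsUnit N)
    {P : Matrix (Fin n) (Fin n) ℂ} (hP : wadj N N P = P) : Pᴴ * N = N * P := by
  have hN' : IsUnit N.det := (isUnit_iff_isUnit_det N).mp hN
  conv_rhs => rw [← hP, wadj, Matrix.mul_assoc, mul_nonsing_inv_cancel_left N _ hN']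

theorem mul_wadj_mul_eq_of_mul_eq {M : Matrix (Fin m) (Fin m) ℂ} {N : Matrix (Fin n) (Fin n) ℂ}
    {L : Matrix (Fin l) (Fin l) ℂ} (hM : IsUnit M) (hN : IsUnit N) (hL : L.IsHermitian)
    {A : Matrix (Fin m) (Fin n) ℂ} {B : Matrix (Fin n) (Fin l) ℂ} {P : Matrix (Fin n) (Fin n) ℂ}
    (hP : wadj N N P = P)
    (hPB : P * (B * wadj N L B * wadj M N A) = B * wadj N L B * wadj M N A) :
    A * B * wadj N L B * P = A * B * wadj N L B := by
  set W := B * L⁻¹ * (A * B)ᴴ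
  have hW : P * W = W := by
    have hWM : B * wadj N L B * wadj M N A = W * M := by
      rw [Matrix.mul_assoc B, ← wadj_mul hN, wadj, ← Matrix.mul_assoc, ← Matrix.mul_assoc]
    rw [hWM, ← Matrix.mul_assoc] at hPB
    have := hM.invertible
    exact (Matrix.mul_left_inj_of_invertible M).mp hPB
  have hWN : Wᴴ * N = A * B * wadj N L B := by
    simp only [W, wadj, conjTranspose_mul, conjTranspose_conjTranspose, hL.inv.eq, Matrix.mul_assoc]
  rw [← hWN, conjTranspose_mul_mul_eq_of_mul_eq (conjTranspose_mul_eq_of_wadj_eq_self hN hP) hW]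

end WeightedAdjoint

theorem stmt_11_general {m n l : ℕ} (M : Matrix (Fin m) (Fin m) ℂ) (N : Matrix (Fin n) (Fin n) ℂ)
    (L : Matrix (Fin l) (Fin l) ℂ)
    (hMu : IsUnit M) (hNu : IsUnit N)
    (hL : L.IsHermitian)
    (A : Matrix (Fin m) (Fin n) ℂ) (B : Matrix (Fin n) (Fin l) ℂ)
    (X : Matrix (Fin n) (Fin m) ℂ) (Y : Matrix (Fin l) (Fin n) ℂ)
    (hX : IsWMP M N A X)
    (h1 : B * Y * (wadj M N A * A * B) = wadj M N A * A * B)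
    (h2 : X * A * (B * wadj N L B * wadj M N A) = B * wadj N L B * wadj M N A) :
    (Matrix.fromBlocks (A * B) (A * wadj M N A * (A * B))
        (A * B * (wadj N L B * B)) (A * B * wadj M L (A * B) * (A * B))).rank =
      (A * B).rank := by
  set D := A * B
  set P := D * wadj N L B * X
  set Q := Y * wadj M N A * D
  have e12 : A * wadj M N A * D = D * Q := by
    simp only [D, Q, Matrix.mul_assoc] at h1 ⊢
    rw [h1]
  have e21 : D * (wadj N L B * B) = P * D := by
    have hPD : P * D = D * wadj N L B * (X * A) * B := by simp only [P, D, Matrix.mul_assoc]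
    rw [hPD, mul_wadj_mul_eq_of_mul_eq hMu hNu hL hX.2.2.2 h2]
    simp only [D, Matrix.mul_assoc]
  have e22 : D * wadj M L D * D = P * D * Q := by
    rw [← e21]
    simp only [D, Q, wadj_mul hNu, Matrix.mul_assoc] at h1 ⊢
    rw [h1]
  rw [e12, e21, e22, Matrix.rank_fromBlocks_mul]

theorem stmt_11 {m n l : ℕ} (M : Matrix (Fin m) (Fin m) ℂ) (N : Matrix (Fin n) (Fin n) ℂ)
    (L : Matrix (Fin l) (Fin l) ℂ)
    (hM : M.IsHermitian) (hMu : IsUnit M) (hN : N.IsHermitian) (hNu : IsUnit N)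
    (hL : L.IsHermitian) (hLu : IsUnit L)
    (A : Matrix (Fin m) (Fin n) ℂ) (B : Matrix (Fin n) (Fin l) ℂ)
    (X : Matrix (Fin n) (Fin m) ℂ) (Y : Matrix (Fin l) (Fin n) ℂ)
    (hX : IsWMP M N A X) (hY : IsWMP N L B Y)
    (h1 : B * Y * (wadj M N A * A * B) = wadj M N A * A * B)
    (h2 : X * A * (B * wadj N L B * wadj M N A) = B * wadj N L B * wadj M N A) :
    (Matrix.fromBlocks (A * B) (A * wadj M N A * (A * B))
        (A * B * (wadj N L B * B)) (A * B * wadj M L (A * B) * (A * B))).rank =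
      (A * B).rank :=
  stmt_11_general M N L hMu hNu hL A B X Y hX h1 h2
end

section
/- Let A ∈ C^{m×n} and B ∈ C^{n×ℓ} with A^[†] and B^[†] existing. If any of the equivalent conditions of the weighted Greville theorem holds (e.g., B B^[†] A^[*] A B = A^[*] A B and A^[†] A B B^[*] A^[*] = B B^[*] A^[*]), then (AB)^[†] exists and (AB)^[†] = B^[†] A^[†]. -/
open Matrix

lemma wadj_mul_s12 {a b c : ℕ} (W1 : Matrix (Fin a) (Fin a) ℂ) (W2 : Matrix (Fin b) (Fin b) ℂ)
    (W3 : Matrix (Fin c) (Fin c) ℂ) (hW2 : IsUnit W2)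
    (U : Matrix (Fin a) (Fin b) ℂ) (V : Matrix (Fin b) (Fin c) ℂ) :
    wadj W1 W3 (U * V) = wadj W2 W3 V * wadj W1 W2 U := by
  have h : W2 * W2⁻¹ = 1 := Matrix.mul_nonsing_inv _ ((Matrix.isUnit_iff_isUnit_det _).mp hW2)
  simp only [wadj, conjTranspose_mul, Matrix.mul_assoc]
  rw [← Matrix.mul_assoc W2 W2⁻¹, h, Matrix.one_mul]

lemma wadj_wadj {a b : ℕ} (W1 : Matrix (Fin a) (Fin a) ℂ) (W2 : Matrix (Fin b) (Fin b) ℂ)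
    (hW1 : W1.IsHermitian) (hW1u : IsUnit W1) (hW2 : W2.IsHermitian) (hW2u : IsUnit W2)
    (U : Matrix (Fin a) (Fin b) ℂ) :
    wadj W2 W1 (wadj W1 W2 U) = U := by
  have h1 : W1⁻¹ * W1 = 1 := Matrix.nonsing_inv_mul _ ((Matrix.isUnit_iff_isUnit_det _).mp hW1u)
  have h2 : W2⁻¹ * W2 = 1 := Matrix.nonsing_inv_mul _ ((Matrix.isUnit_iff_isUnit_det _).mp hW2u)
  simp only [wadj, conjTranspose_mul, conjTranspose_conjTranspose,
    Matrix.conjTranspose_nonsing_inv, hW1.eq, hW2.eq, Matrix.mul_assoc]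
  rw [h2, Matrix.mul_one, ← Matrix.mul_assoc, h1, Matrix.one_mul]

theorem stmt_12 {m n l : ℕ} (M : Matrix (Fin m) (Fin m) ℂ) (N : Matrix (Fin n) (Fin n) ℂ)
    (L : Matrix (Fin l) (Fin l) ℂ)
    (hM : M.IsHermitian) (hMu : IsUnit M) (hN : N.IsHermitian) (hNu : IsUnit N)
    (hL : L.IsHermitian) (hLu : IsUnit L)
    (A : Matrix (Fin m) (Fin n) ℂ) (B : Matrix (Fin n) (Fin l) ℂ)
    (X : Matrix (Fin n) (Fin m) ℂ) (Y : Matrix (Fin l) (Fin n) ℂ)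
    (hX : IsWMP M N A X) (hY : IsWMP N L B Y)
    (h1 : B * Y * (wadj M N A * A * B) = wadj M N A * A * B)
    (h2 : X * A * (B * wadj N L B * wadj M N A) = B * wadj N L B * wadj M N A) :
    IsWMP M L (A * B) (Y * X) := by
  obtain ⟨hX1, hX2, hX3, hX4⟩ := hX
  obtain ⟨hY1, hY2, hY3, hY4⟩ := hY
  -- basic combinations of the weighted adjoints
  have pAX : wadj N M X * wadj M N A = A * X := by
    rw [← wadj_mul_s12 M N M hNu A X, hX3]
  have pXA : wadj M N A * wadj N M X = X * A := by
    rw [← wadj_mul_s12 N M N hMu X A, hX4]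
  have pBY : wadj L N Y * wadj N L B = B * Y := by
    rw [← wadj_mul_s12 N L N hLu B Y, hY3]
  have pYB : wadj N L B * wadj L N Y = Y * B := by
    rw [← wadj_mul_s12 L N L hNu Y B, hY4]
  have p2 : X * (A * X) = X := by rw [← Matrix.mul_assoc, hX2]
  have p3 : B * (Y * B) = B := by rw [← Matrix.mul_assoc, hY1]
  have pdA1 : wadj M N A * (A * X) = wadj M N A := by
    conv_rhs => rw [← hX1]
    rw [wadj_mul_s12 M M N hMu (A * X) A, hX3]
  have pdB2 : Y * B * wadj N L B = wadj N L B := by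
    conv_rhs => rw [← hY1, Matrix.mul_assoc]
    rw [wadj_mul_s12 N L L hLu B (Y * B), hY4]
  -- adjoint forms of the hypotheses
  have h1a : wadj N L B * (wadj M N A * A) * (B * Y) = wadj N L B * (wadj M N A * A) := by
    have e := congrArg (wadj N L) h1
    rw [wadj_mul_s12 N N L hNu (B * Y) (wadj M N A * A * B)] at e
    rw [hY3] at e
    rw [wadj_mul_s12 N N L hNu (wadj M N A * A) B] at e
    rw [wadj_mul_s12 N M N hMu (wadj M N A) A] at e
    rw [wadj_wadj M N hM hMu hN hNu A] at e
    exact e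
  have h2a : A * (B * wadj N L B) * (X * A) = A * (B * wadj N L B) := by
    have e := congrArg (wadj N M) h2
    rw [wadj_mul_s12 N N M hNu (X * A) (B * wadj N L B * wadj M N A)] at e
    rw [hX4] at e
    rw [wadj_mul_s12 N N M hNu (B * wadj N L B) (wadj M N A)] at e
    rw [wadj_wadj M N hM hMu hN hNu A] at e
    rw [wadj_mul_s12 N L N hLu B (wadj N L B)] at e
    rw [wadj_wadj N L hN hNu hL hLu B] at e
    exact e
  -- ★5 : A'A commutes with BY
  have c1 : B * Y * (wadj M N A * A) * (B * Y) = wadj M N A * A * (B * Y) := by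
    calc B * Y * (wadj M N A * A) * (B * Y)
        = B * Y * (wadj M N A * A * B) * Y := by simp only [Matrix.mul_assoc]
      _ = wadj M N A * A * B * Y := by rw [h1]
      _ = wadj M N A * A * (B * Y) := by rw [Matrix.mul_assoc]
  have c2 : B * Y * (wadj M N A * A) * (B * Y) = B * Y * (wadj M N A * A) := by
    have e := congrArg (fun Z : Matrix (Fin l) (Fin n) ℂ => wadj L N Y * Z) h1a
    simp only [← Matrix.mul_assoc] at e ⊢
    rw [pBY] at e
    exact e
  have s5 : wadj M N A * A * (B * Y) = B * Y * (wadj M N A * A) := by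
    rw [← c1, c2]
  -- ★4 : XA commutes with BB'
  have d1 : X * A * (B * wadj N L B) * (X * A) = B * wadj N L B * (X * A) := by
    have e := congrArg (fun Z : Matrix (Fin n) (Fin m) ℂ => Z * wadj N M X) h2
    simp only [Matrix.mul_assoc] at e ⊢
    rw [pXA] at e
    exact e
  have d2 : X * A * (B * wadj N L B) * (X * A) = X * A * (B * wadj N L B) := by
    have e := congrArg (fun Z : Matrix (Fin m) (Fin n) ℂ => X * Z) h2a
    simp only [← Matrix.mul_assoc] at e ⊢
    exact e
  have s4 : X * A * (B * wadj N L B) = B * wadj N L B * (X * A) := by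
    rw [← d2, d1]
  -- key commutation XA·BY = BY·XA
  have key9 : X * A * (B * Y) = B * wadj N L B * (X * A) * (wadj L N Y * Y) := by
    calc X * A * (B * Y)
        = X * A * (B * (Y * B)) * Y := by rw [p3]; simp only [Matrix.mul_assoc]
      _ = X * A * (B * (wadj N L B * wadj L N Y)) * Y := by rw [pYB]
      _ = X * A * (B * wadj N L B) * (wadj L N Y * Y) := by simp only [Matrix.mul_assoc]
      _ = B * wadj N L B * (X * A) * (wadj L N Y * Y) := by rw [s4]
  have keyRPR : B * Y * (X * A * (B * Y)) = X * A * (B * Y) := by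
    calc B * Y * (X * A * (B * Y))
        = B * Y * (B * wadj N L B * (X * A) * (wadj L N Y * Y)) := by rw [key9]
      _ = B * wadj N L B * (X * A) * (wadj L N Y * Y) := by
          simp only [← Matrix.mul_assoc]
          rw [hY1]
      _ = X * A * (B * Y) := by rw [← key9]
  have keyRPR2 : B * Y * (X * A) * (B * Y) = B * Y * (X * A) := by
    have e := congrArg (wadj N N) keyRPR
    rw [wadj_mul_s12 N N N hNu (B * Y) (X * A * (B * Y))] at e
    rw [wadj_mul_s12 N N N hNu (X * A) (B * Y)] at e
    rw [hY3, hX4] at e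
    exact e
  have comm : X * A * (B * Y) = B * Y * (X * A) := by
    rw [← keyRPR, ← Matrix.mul_assoc]
    exact keyRPR2
  -- the four weighted Penrose equations for A*B, Y*X
  have G1 : A * B * (Y * X) * (A * B) = A * B := by
    calc A * B * (Y * X) * (A * B)
        = A * (B * Y * (X * A) * B) := by simp only [Matrix.mul_assoc]
      _ = A * (X * A * (B * Y) * B) := by rw [comm]
      _ = A * B := by
          simp only [Matrix.mul_assoc]
          rw [p3, ← Matrix.mul_assoc, ← Matrix.mul_assoc, hX1]
  have G2 : Y * X * (A * B) * (Y * X) = Y * X := by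
    calc Y * X * (A * B) * (Y * X)
        = Y * (X * A * (B * Y) * X) := by simp only [Matrix.mul_assoc]
      _ = Y * (B * Y * (X * A) * X) := by rw [comm]
      _ = Y * X := by
          simp only [Matrix.mul_assoc]
          rw [p2, ← Matrix.mul_assoc, ← Matrix.mul_assoc, hY2]
  have G3 : wadj M M (A * B * (Y * X)) = A * B * (Y * X) := by
    rw [wadj_mul_s12 M L M hLu (A * B) (Y * X), wadj_mul_s12 L N M hNu Y X,
      wadj_mul_s12 M N L hNu A B]
    calc wadj N M X * wadj L N Y * (wadj N L B * wadj M N A)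
        = wadj N M X * (wadj L N Y * wadj N L B) * wadj M N A := by
          simp only [Matrix.mul_assoc]
      _ = wadj N M X * (B * Y) * wadj M N A := by rw [pBY]
      _ = wadj N M X * (B * Y) * (wadj M N A * (A * X)) := by rw [pdA1]
      _ = wadj N M X * (B * Y * (wadj M N A * A)) * X := by simp only [Matrix.mul_assoc]
      _ = wadj N M X * (wadj M N A * A * (B * Y)) * X := by rw [s5]
      _ = A * B * (Y * X) := by
          simp only [← Matrix.mul_assoc]
          rw [pAX, hX1]
  have G4 : wadj L L (Y * X * (A * B)) = Y * X * (A * B) := by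
    rw [wadj_mul_s12 L M L hMu (Y * X) (A * B), wadj_mul_s12 M N L hNu A B,
      wadj_mul_s12 L N M hNu Y X]
    calc wadj N L B * wadj M N A * (wadj N M X * wadj L N Y)
        = wadj N L B * (wadj M N A * wadj N M X) * wadj L N Y := by
          simp only [Matrix.mul_assoc]
      _ = wadj N L B * (X * A) * wadj L N Y := by rw [pXA]
      _ = Y * B * wadj N L B * (X * A) * wadj L N Y := by rw [pdB2]
      _ = Y * (B * wadj N L B * (X * A)) * wadj L N Y := by simp only [Matrix.mul_assoc]
      _ = Y * (X * A * (B * wadj N L B)) * wadj L N Y := by rw [s4]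
      _ = Y * X * (A * B) := by
          simp only [Matrix.mul_assoc]
          rw [pYB, p3]
  exact ⟨G1, G2, G3, G4⟩
end

section
/- Let A ∈ C^{m×n} and B ∈ C^{n×ℓ} such that A^[†] and B^[†] exist. Then rank(AB − A B B^[†] A^[†] A B) = rank([[B^[*] A^[*], B^[*] B],[A A^[*], A B]]) + rank(AB) − rank(A) − rank(B). -/
open Matrix Module

section Aux

variable {p q r s : Type*}

private lemma rank_submatrix_equiv [Fintype p] [Fintype q] [Fintype r] [Fintype s]
    (M : Matrix p q ℂ) (e₁ : r ≃ p) (e₂ : s ≃ q) :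
    (M.submatrix e₁ e₂).rank = M.rank := by
  rw [Matrix.rank, Matrix.rank, Matrix.mulVecLin_submatrix, LinearMap.range_comp,
    LinearMap.range_comp_of_range_eq_top _ (LinearMap.range_eq_top.mpr
      (LinearMap.funLeft_surjective_of_injective ℂ ℂ _ e₂.symm.injective)),
    show LinearMap.funLeft ℂ ℂ (e₁ : r → p) = (LinearEquiv.funCongrLeft ℂ ℂ e₁ :
      (p → ℂ) →ₗ[ℂ] (r → ℂ)) from rfl]
  exact LinearEquiv.finrank_map_eq _ _

private lemma range_prodMap' {V W V' W' : Type*} [AddCommGroup V] [AddCommGroup W]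
    [AddCommGroup V'] [AddCommGroup W'] [Module ℂ V] [Module ℂ W] [Module ℂ V'] [Module ℂ W']
    (f : V →ₗ[ℂ] V') (g : W →ₗ[ℂ] W') :
    LinearMap.range (f.prodMap g) = (LinearMap.range f).prod (LinearMap.range g) := by
  ext ⟨a, b⟩
  simp only [LinearMap.mem_range, Submodule.mem_prod, LinearMap.prodMap_apply, Prod.mk.injEq,
    Prod.exists]
  exact ⟨fun ⟨x, y, h1, h2⟩ => ⟨⟨x, h1⟩, ⟨y, h2⟩⟩, fun ⟨⟨u, hu⟩, ⟨v, hv⟩⟩ => ⟨u, v, hu, hv⟩⟩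

private def prodSubEquiv {V W : Type*} [AddCommGroup V] [AddCommGroup W] [Module ℂ V]
    [Module ℂ W] (S : Submodule ℂ V) (T : Submodule ℂ W) : ↥(S.prod T) ≃ₗ[ℂ] ↥S × ↥T where
  toFun x := (⟨x.1.1, x.2.1⟩, ⟨x.1.2, x.2.2⟩)
  invFun y := ⟨(y.1.1, y.2.1), ⟨y.1.2, y.2.2⟩⟩
  map_add' _ _ := rfl
  map_smul' _ _ := rfl
  left_inv _ := rfl
  right_inv _ := rfl

private lemma finrank_prod_sub {V W : Type*} [AddCommGroup V] [AddCommGroup W] [Module ℂ V]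
    [Module ℂ W] [FiniteDimensional ℂ V] [FiniteDimensional ℂ W]
    (S : Submodule ℂ V) (T : Submodule ℂ W) :
    finrank ℂ (S.prod T) = finrank ℂ S + finrank ℂ T :=
  (LinearEquiv.finrank_eq (prodSubEquiv S T)).trans (Module.finrank_prod)

private lemma rank_fromBlocks_diag [Fintype p] [Fintype q] [Fintype r] [Fintype s]
    (A : Matrix p r ℂ) (D : Matrix q s ℂ) :
    (fromBlocks A 0 0 D).rank = A.rank + D.rank := by
  have h : (fromBlocks A 0 0 D).mulVecLin =
      ((LinearEquiv.sumArrowLequivProdArrow p q ℂ ℂ).symm.toLinearMap.comp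
        (A.mulVecLin.prodMap D.mulVecLin)).comp
        (LinearEquiv.sumArrowLequivProdArrow r s ℂ ℂ).toLinearMap := by
    apply LinearMap.ext; intro x; funext i
    cases i <;>
      simp [fromBlocks_mulVec, LinearEquiv.sumArrowLequivProdArrow,
        Equiv.sumArrowEquivProdArrow, Matrix.mulVecLin_apply, Function.comp]
  rw [Matrix.rank, h, LinearMap.range_comp_of_range_eq_top _ (LinearMap.range_eq_top.mpr
      (LinearEquiv.sumArrowLequivProdArrow r s ℂ ℂ).surjective),
    LinearMap.range_comp, range_prodMap']
  rw [LinearEquiv.finrank_map_eq]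
  rw [finrank_prod_sub]
  rfl

private lemma rank_fromBlocks_antidiag [Fintype p] [Fintype q] [Fintype r] [Fintype s]
    (B : Matrix p s ℂ) (C : Matrix q r ℂ) :
    (fromBlocks (0 : Matrix p r ℂ) B C (0 : Matrix q s ℂ)).rank = B.rank + C.rank := by
  have h : fromBlocks (0 : Matrix p r ℂ) B C (0 : Matrix q s ℂ)
      = (fromBlocks C (0 : Matrix q s ℂ) (0 : Matrix p r ℂ) B).submatrix
        (Equiv.sumComm p q) (Equiv.refl (r ⊕ s)) := by
    ext i j; cases i <;> cases j <;> rfl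
  rw [h, rank_submatrix_equiv, rank_fromBlocks_diag, add_comm]

private lemma rank_neg' [Fintype q] (M : Matrix p q ℂ) : (-M).rank = M.rank := by
  have h : (-M).mulVecLin = -M.mulVecLin := by ext x i; simp [Matrix.neg_mulVec]
  rw [Matrix.rank, Matrix.rank, h, LinearMap.range_neg]

end Aux

open Matrix

theorem stmt_16 {m n l : ℕ} (M : Matrix (Fin m) (Fin m) ℂ) (N : Matrix (Fin n) (Fin n) ℂ)
    (L : Matrix (Fin l) (Fin l) ℂ)
    (hM : M.IsHermitian) (hMu : IsUnit M) (hN : N.IsHermitian) (hNu : IsUnit N)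
    (hL : L.IsHermitian) (hLu : IsUnit L)
    (A : Matrix (Fin m) (Fin n) ℂ) (B : Matrix (Fin n) (Fin l) ℂ)
    (X : Matrix (Fin n) (Fin m) ℂ) (Y : Matrix (Fin l) (Fin n) ℂ)
    (hX : IsWMP M N A X) (hY : IsWMP N L B Y) :
    (A * B - A * B * Y * X * (A * B)).rank + A.rank + B.rank =
      (Matrix.fromBlocks (wadj N L B * wadj M N A) (wadj N L B * B)
        (A * wadj M N A) (A * B)).rank + (A * B).rank := by
  obtain ⟨hX1, hX2, hX3, hX4⟩ := hX
  obtain ⟨hY1, hY2, hY3, hY4⟩ := hY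
  clear hX2 hX3 hY2 hY4
  have hMd : IsUnit M.det := (Matrix.isUnit_iff_isUnit_det M).mp hMu
  have hNd : IsUnit N.det := (Matrix.isUnit_iff_isUnit_det N).mp hNu
  have hLd : IsUnit L.det := (Matrix.isUnit_iff_isUnit_det L).mp hLu
  simp only [wadj] at hX4 hY3 ⊢
  have hX1' : A * (X * A) = A := by rw [← Matrix.mul_assoc, hX1]
  have hY1' : B * (Y * B) = B := by rw [← Matrix.mul_assoc, hY1]
  set As : Matrix (Fin n) (Fin m) ℂ := N⁻¹ * Aᴴ * M with hAs
  set Bs : Matrix (Fin l) (Fin n) ℂ := L⁻¹ * Bᴴ * N with hBs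
  set Xs : Matrix (Fin m) (Fin n) ℂ := M⁻¹ * Xᴴ * N with hXs
  set Ys : Matrix (Fin n) (Fin l) ℂ := N⁻¹ * Yᴴ * L with hYs
  -- the fundamental identities
  have i2 : As * Xs = X * A := by
    rw [conjTranspose_mul] at hX4
    rw [hAs, hXs]
    simp only [Matrix.mul_assoc] at hX4 ⊢
    rw [Matrix.mul_nonsing_inv_cancel_left M _ hMd]
    exact hX4
  have i4 : Ys * Bs = B * Y := by
    rw [conjTranspose_mul] at hY3
    rw [hYs, hBs]
    simp only [Matrix.mul_assoc] at hY3 ⊢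
    rw [Matrix.mul_nonsing_inv_cancel_left L _ hLd]
    exact hY3
  have i1 : X * (A * As) = As := by
    have h : (X * A) * (N⁻¹ * Aᴴ * M) = N⁻¹ * Aᴴ * M := by
      conv_lhs => rw [← hX4]
      simp only [Matrix.mul_assoc]
      rw [Matrix.mul_nonsing_inv_cancel_left N _ hNd]
      rw [← Matrix.mul_assoc ((X * A)ᴴ) Aᴴ M, ← Matrix.conjTranspose_mul A (X * A), hX1']
    rw [hAs]
    simpa only [Matrix.mul_assoc] using h
  have i3 : Bs * (B * Y) = Bs := by
    have h : (L⁻¹ * Bᴴ * N) * (B * Y) = L⁻¹ * Bᴴ * N := by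
      conv_lhs => rw [← hY3]
      simp only [Matrix.mul_assoc]
      rw [Matrix.mul_nonsing_inv_cancel_left N _ hNd]
      rw [← Matrix.mul_assoc Bᴴ ((B * Y)ᴴ) N, ← Matrix.conjTranspose_mul (B * Y) B, hY1]
    rw [hBs]
    simpa only [Matrix.mul_assoc] using h
  set Sb : Matrix (Fin l) (Fin l) ℂ := Bs * B - Bs * (X * (A * B)) with hSb
  set R : Matrix (Fin n) (Fin l) ℂ := B - B * (Y * (X * (A * B))) with hR
  -- elimination for the big block matrix
  have hE : IsUnit (fromBlocks (1 : Matrix (Fin l) (Fin l) ℂ) (-(Bs * X)) 0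
      (1 : Matrix (Fin m) (Fin m) ℂ)).det := by
    rw [Matrix.det_fromBlocks_zero₂₁]; simp
  have hF : IsUnit (fromBlocks (1 : Matrix (Fin m) (Fin m) ℂ) (-(Xs * B)) 0
      (1 : Matrix (Fin l) (Fin l) ℂ)).det := by
    rw [Matrix.det_fromBlocks_zero₂₁]; simp
  have step1 : fromBlocks (1 : Matrix (Fin l) (Fin l) ℂ) (-(Bs * X)) 0
      (1 : Matrix (Fin m) (Fin m) ℂ) *
      fromBlocks (Bs * As) (Bs * B) (A * As) (A * B) = fromBlocks 0 Sb (A * As) (A * B) := by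
    rw [Matrix.fromBlocks_multiply, Matrix.fromBlocks_inj]
    refine ⟨by simp [Matrix.mul_assoc, i1], ?_, by simp, by simp⟩
    rw [hSb, sub_eq_add_neg]
    simp [Matrix.mul_assoc]
  have j2 : As * (Xs * B) = X * (A * B) := by rw [← Matrix.mul_assoc, i2, Matrix.mul_assoc]
  have j3 : A * (X * (A * B)) = A * B := by
    rw [← Matrix.mul_assoc, ← Matrix.mul_assoc, hX1]
  have step2 : fromBlocks 0 Sb (A * As) (A * B) *
      fromBlocks (1 : Matrix (Fin m) (Fin m) ℂ) (-(Xs * B)) 0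
      (1 : Matrix (Fin l) (Fin l) ℂ) = fromBlocks 0 Sb (A * As) 0 := by
    rw [Matrix.fromBlocks_multiply, Matrix.fromBlocks_inj]
    exact ⟨by simp, by simp, by simp, by simp [Matrix.mul_assoc, j2, j3]⟩
  have hK : (fromBlocks (Bs * As) (Bs * B) (A * As) (A * B)).rank
      = Sb.rank + (A * As).rank := by
    have h1 := Matrix.rank_mul_eq_right_of_isUnit_det _
      (fromBlocks (Bs * As) (Bs * B) (A * As) (A * B)) hE
    have h2 := Matrix.rank_mul_eq_left_of_isUnit_det _
      (fromBlocks 0 Sb (A * As) (A * B)) hF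
    rw [step1] at h1
    rw [step2] at h2
    rw [← h1, ← h2, rank_fromBlocks_antidiag]
  -- rank (A * As) = rank A
  have hAAs : A * As * Xs = A := by rw [Matrix.mul_assoc, i2]; exact hX1'
  have hrA : (A * As).rank = A.rank := by
    refine le_antisymm (Matrix.rank_mul_le_left A As) ?_
    have h := Matrix.rank_mul_le_left (A * As) Xs
    rwa [hAAs] at h
  -- rank Sb = rank R
  have hBsR : Bs * R = Sb := by
    rw [hR, hSb, Matrix.mul_sub]
    congr 1
    rw [← Matrix.mul_assoc Bs B _, ← Matrix.mul_assoc (Bs * B) Y _,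
      Matrix.mul_assoc Bs B Y, i3]
  have hYsSb : Ys * Sb = R := by
    rw [hSb, hR, Matrix.mul_sub]
    congr 1
    · rw [← Matrix.mul_assoc, i4]; exact hY1
    · rw [← Matrix.mul_assoc, i4, Matrix.mul_assoc]
  have hrSb : Sb.rank = R.rank := by
    refine le_antisymm ?_ ?_
    · have h := Matrix.rank_mul_le_right Bs R
      rwa [hBsR] at h
    · have h := Matrix.rank_mul_le_right Ys Sb
      rwa [hYsSb] at h
  -- second elimination
  have hU1 : IsUnit (fromBlocks (1 : Matrix (Fin n) (Fin n) ℂ) 0 (-A)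
      (1 : Matrix (Fin m) (Fin m) ℂ)).det := by
    rw [Matrix.det_fromBlocks_zero₁₂]; simp
  have hV1 : IsUnit (fromBlocks (1 : Matrix (Fin l) (Fin l) ℂ)
      (-(Y * B - Y * (X * (A * B)))) 0 (1 : Matrix (Fin l) (Fin l) ℂ)).det := by
    rw [Matrix.det_fromBlocks_zero₂₁]; simp
  have step3 : fromBlocks (1 : Matrix (Fin n) (Fin n) ℂ) 0 (-A)
      (1 : Matrix (Fin m) (Fin m) ℂ) * fromBlocks B R (A * B) 0
      = fromBlocks B R 0 (-(A * R)) := by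
    rw [Matrix.fromBlocks_multiply, Matrix.fromBlocks_inj]
    exact ⟨by simp, by simp, by simp, by simp⟩
  have step4 : fromBlocks B R 0 (-(A * R)) * fromBlocks (1 : Matrix (Fin l) (Fin l) ℂ)
      (-(Y * B - Y * (X * (A * B)))) 0 (1 : Matrix (Fin l) (Fin l) ℂ)
      = fromBlocks B 0 0 (-(A * R)) := by
    rw [Matrix.fromBlocks_multiply, Matrix.fromBlocks_inj]
    refine ⟨by simp, ?_, by simp, by simp⟩
    rw [Matrix.mul_one, Matrix.mul_neg, Matrix.mul_sub, hY1', hR]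
    exact neg_add_cancel _
  have hU2 : IsUnit (fromBlocks (1 : Matrix (Fin n) (Fin n) ℂ) (-(B * (Y * X))) 0
      (1 : Matrix (Fin m) (Fin m) ℂ)).det := by
    rw [Matrix.det_fromBlocks_zero₂₁]; simp
  have hV2 : IsUnit (fromBlocks (1 : Matrix (Fin l) (Fin l) ℂ) 0 (-1)
      (1 : Matrix (Fin l) (Fin l) ℂ)).det := by
    rw [Matrix.det_fromBlocks_zero₁₂]; simp
  have step5 : fromBlocks (1 : Matrix (Fin n) (Fin n) ℂ) (-(B * (Y * X))) 0
      (1 : Matrix (Fin m) (Fin m) ℂ) * fromBlocks B R (A * B) 0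
      = fromBlocks R R (A * B) 0 := by
    rw [Matrix.fromBlocks_multiply, Matrix.fromBlocks_inj]
    refine ⟨?_, by simp, by simp, by simp⟩
    rw [hR, sub_eq_add_neg]
    simp [Matrix.mul_assoc]
  have step6 : fromBlocks R R (A * B) 0 * fromBlocks (1 : Matrix (Fin l) (Fin l) ℂ) 0 (-1)
      (1 : Matrix (Fin l) (Fin l) ℂ) = fromBlocks 0 R (A * B) 0 := by
    rw [Matrix.fromBlocks_multiply, Matrix.fromBlocks_inj]
    exact ⟨by simp, by simp, by simp, by simp⟩
  have hT1 : (fromBlocks B R (A * B) 0).rank = B.rank + (A * R).rank := by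
    have h1 := Matrix.rank_mul_eq_right_of_isUnit_det _ (fromBlocks B R (A * B) 0) hU1
    have h2 := Matrix.rank_mul_eq_left_of_isUnit_det _ (fromBlocks B R 0 (-(A * R))) hV1
    rw [step3] at h1
    rw [step4] at h2
    rw [← h1, ← h2, rank_fromBlocks_diag, rank_neg']
  have hT2 : (fromBlocks B R (A * B) 0).rank = R.rank + (A * B).rank := by
    have h1 := Matrix.rank_mul_eq_right_of_isUnit_det _ (fromBlocks B R (A * B) 0) hU2
    have h2 := Matrix.rank_mul_eq_left_of_isUnit_det _ (fromBlocks R R (A * B) 0) hV2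
    rw [step5] at h1
    rw [step6] at h2
    rw [← h1, ← h2, rank_fromBlocks_antidiag]
  have hD : A * R = A * B - A * B * Y * X * (A * B) := by
    rw [hR, Matrix.mul_sub]
    congr 1
    simp [Matrix.mul_assoc]
  have hfin : B.rank + (A * R).rank = R.rank + (A * B).rank := hT1.symm.trans hT2
  rw [← hD, hK, hrA, hrSb]
  omega
end

section
/- Let A ∈ C^{m×n} and B ∈ C^{n×ℓ} with A^[†] and B^[†] existing. Then rank([B B^[†] A^[†] A]) = rank([B A^[*]]), where the matrices are horizontal block concatenations. -/
open Matrix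

/-
Right multiplication by a block-diagonal matrix cannot raise the rank of `[C, D]`, so it suffices
to write each block of either side as the corresponding block of the other side times a matrix.
For the `B`-blocks this is `B = (B B^[†]) B`. For the other blocks, the weighted Penrose equation
`(A^[†] A)^[*] = A^[†] A` gives `A^[†] A = N⁻¹ Aᴴ (A^[†])ᴴ N = A^[*] (M⁻¹ (A^[†])ᴴ N)`, and combined
with `A A^[†] A = A` it gives `A^[†] A A^[*] = A^[*]`.
-/

theorem Matrix.rank_fromCols_mul_le {R m n₁ n₂ k₁ k₂ : Type*}
    [CommSemiring R] [StrongRankCondition R] [Fintype n₁] [Fintype n₂] [Fintype k₁] [Fintype k₂]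
    (C : Matrix m n₁ R) (D : Matrix m n₂ R) (P : Matrix n₁ k₁ R) (Q : Matrix n₂ k₂ R) :
    (fromCols (C * P) (D * Q)).rank ≤ (fromCols C D).rank := by
  have hblock : fromCols (C * P) (D * Q) = fromCols C D * fromBlocks P 0 0 Q := by
    simp [fromCols_mul_fromBlocks]
  rw [hblock]
  exact rank_mul_le_left _ _

namespace IsWMP

variable {m n : ℕ} {M : Matrix (Fin m) (Fin m) ℂ} {N : Matrix (Fin n) (Fin n) ℂ}
  {A : Matrix (Fin m) (Fin n) ℂ} {X : Matrix (Fin n) (Fin m) ℂ}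

theorem mul_eq_inv_mul_conjTranspose (hX : IsWMP M N A X) : X * A = N⁻¹ * Aᴴ * Xᴴ * N := by
  conv_lhs => rw [← hX.2.2.2]
  simp [wadj, conjTranspose_mul, Matrix.mul_assoc]

theorem mul_eq_wadj_mul (hX : IsWMP M N A X) (hM : IsUnit M) :
    X * A = wadj M N A * (M⁻¹ * Xᴴ * N) := by
  have hMdet : IsUnit M.det := (isUnit_iff_isUnit_det M).mp hM
  calc X * A = N⁻¹ * Aᴴ * (M * M⁻¹) * Xᴴ * N := by
        rw [mul_nonsing_inv _ hMdet, Matrix.mul_one, hX.mul_eq_inv_mul_conjTranspose]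
    _ = wadj M N A * (M⁻¹ * Xᴴ * N) := by simp only [wadj, Matrix.mul_assoc]

theorem mul_mul_wadj (hX : IsWMP M N A X) (hN : IsUnit N) :
    X * A * wadj M N A = wadj M N A := by
  have hNdet : IsUnit N.det := (isUnit_iff_isUnit_det N).mp hN
  calc X * A * wadj M N A = N⁻¹ * ((A * X * A)ᴴ * M) := by
        rw [hX.mul_eq_inv_mul_conjTranspose, wadj]
        simp only [conjTranspose_mul, Matrix.mul_assoc, mul_nonsing_inv_cancel_left _ _ hNdet]
    _ = wadj M N A := by rw [hX.1, wadj, Matrix.mul_assoc]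

end IsWMP

theorem stmt_18_general {m n l : ℕ} (M : Matrix (Fin m) (Fin m) ℂ) (N : Matrix (Fin n) (Fin n) ℂ)
    (L : Matrix (Fin l) (Fin l) ℂ)
    (hMu : IsUnit M) (hNu : IsUnit N)
    (A : Matrix (Fin m) (Fin n) ℂ) (B : Matrix (Fin n) (Fin l) ℂ)
    (X : Matrix (Fin n) (Fin m) ℂ) (Y : Matrix (Fin l) (Fin n) ℂ)
    (hX : IsWMP M N A X) (hY : IsWMP N L B Y) :
    (Matrix.fromCols (B * Y) (X * A)).rank =
      (Matrix.fromCols B (wadj M N A)).rank := by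
  apply le_antisymm
  · rw [hX.mul_eq_wadj_mul hMu]
    exact rank_fromCols_mul_le _ _ _ _
  · calc (fromCols B (wadj M N A)).rank
        = (fromCols (B * Y * B) (X * A * wadj M N A)).rank := by
          rw [hY.1, hX.mul_mul_wadj hNu]
      _ ≤ (fromCols (B * Y) (X * A)).rank := rank_fromCols_mul_le _ _ _ _

theorem stmt_18 {m n l : ℕ} (M : Matrix (Fin m) (Fin m) ℂ) (N : Matrix (Fin n) (Fin n) ℂ)
    (L : Matrix (Fin l) (Fin l) ℂ)
    (hM : M.IsHermitian) (hMu : IsUnit M) (hN : N.IsHermitian) (hNu : IsUnit N)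
    (hL : L.IsHermitian) (hLu : IsUnit L)
    (A : Matrix (Fin m) (Fin n) ℂ) (B : Matrix (Fin n) (Fin l) ℂ)
    (X : Matrix (Fin n) (Fin m) ℂ) (Y : Matrix (Fin l) (Fin n) ℂ)
    (hX : IsWMP M N A X) (hY : IsWMP N L B Y) :
    (Matrix.fromCols (B * Y) (X * A)).rank =
      (Matrix.fromCols B (wadj M N A)).rank :=
  stmt_18_general M N L hMu hNu A B X Y hX hY
end
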